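/- Let G₁ = ⟨A, M, S, Σ⟩ and G₂ = ⟨Q, S, E, T, Σ⟩ as subgroups of Sym(Ω). Then G₁ ∩ G₂ = ⟨Q, S, T, Σ⟩, and this group equals the normalizer of A in G₂. -/

import Mathlib

open Equiv

/-! Context: `q = 3^r`, `K = F_q` a finite field with `3^r` elements, `Ω = K × K × K`,
`ε = 3^(r-1)` (so `q = 3ε`).  Permutations of `Ω` are composed left to right in the paper;
in Lean, `(g * h) x = g (h x)`, so the paper's product `g·h` corresponds to `h * g` here,
and the paper's conjugate `g⁻¹ x g` corresponds to `g * x * g⁻¹`. -/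

/-- The permutation `α_{(u,v,w)} : (a,b,c) ↦ (a+u, b+v, c+w)` of `Ω = K × K × K`. -/
def alphaPerm {K : Type*} [Field K] (u v w : K) : Equiv.Perm (K × K × K) where
  toFun x := (x.1 + u, x.2.1 + v, x.2.2 + w)
  invFun x := (x.1 - u, x.2.1 - v, x.2.2 - w)
  left_inv x := by simp
  right_inv x := by simp

/-- The permutation `β_{λ,μ} : (a,b,c) ↦ (λa, μb, (λμ)^{2ε} c)` of `Ω = K × K × K`. -/
def betaPerm {K : Type*} [Field K] (ε : ℕ) (l m : Kˣ) : Equiv.Perm (K × K × K) where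
  toFun x := ((l : K) * x.1, (m : K) * x.2.1, (((l * m) ^ (2 * ε) : Kˣ) : K) * x.2.2)
  invFun x := ((l⁻¹ : Kˣ) * x.1, (m⁻¹ : Kˣ) * x.2.1, ((((l * m) ^ (2 * ε))⁻¹ : Kˣ) : K) * x.2.2)
  left_inv x := by simp
  right_inv x := by simp

/-- The permutation `γ_e : (a,b,c) ↦ (a+eb, b, c)` of `Ω = K × K × K`. -/
def gammaPerm {K : Type*} [Field K] (e : K) : Equiv.Perm (K × K × K) where
  toFun x := (x.1 + e * x.2.1, x.2.1, x.2.2)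
  invFun x := (x.1 - e * x.2.1, x.2.1, x.2.2)
  left_inv x := by simp
  right_inv x := by simp

/-- The permutation `δ : (a,b,c) ↦ (b, -a, c)` of `Ω = K × K × K`. -/
def deltaPerm (K : Type*) [Field K] : Equiv.Perm (K × K × K) where
  toFun x := (x.2.1, -x.1, x.2.2)
  invFun x := (-x.2.1, x.1, x.2.2)
  left_inv x := by simp
  right_inv x := by simp

/-- The permutation `τ_d : (a,b,c) ↦ (a + d·b² + d^ε·c, b, c)` of `Ω = K × K × K`. -/
def tauPerm {K : Type*} [Field K] (ε : ℕ) (d : K) : Equiv.Perm (K × K × K) where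
  toFun x := (x.1 + d * x.2.1 ^ 2 + d ^ ε * x.2.2, x.2.1, x.2.2)
  invFun x := (x.1 - d * x.2.1 ^ 2 - d ^ ε * x.2.2, x.2.1, x.2.2)
  left_inv x := by obtain ⟨a, b, c⟩ := x; simp; ring
  right_inv x := by obtain ⟨a, b, c⟩ := x; simp; ring

/-- The cube map `x ↦ x³` as a permutation of a finite field of characteristic 3. -/
noncomputable def frobPerm (K : Type*) [Field K] [Fintype K] [CharP K 3] : Equiv.Perm K :=
  Equiv.ofBijective (fun x => x ^ 3)
    (Finite.injective_iff_bijective.mp (by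
      intro x y h
      exact frobenius_inj K 3 (by simpa [frobenius_def] using h)))

/-- The permutation `σ : (a,b,c) ↦ (a³, b³, c³)` of `Ω = K × K × K`. -/
noncomputable def sigmaPerm (K : Type*) [Field K] [Fintype K] [CharP K 3] :
    Equiv.Perm (K × K × K) :=
  (frobPerm K).prodCongr ((frobPerm K).prodCongr (frobPerm K))

variable (K : Type*) [Field K]

/-- `A = ⟨α_{(u,v,w)} : u,v,w ∈ F_q⟩`. -/
def Agrp : Subgroup (Equiv.Perm (K × K × K)) :=
  Subgroup.closure {g | ∃ u v w : K, g = alphaPerm u v w}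

/-- `V = ⟨α_{(u,v,0)} : u,v ∈ F_q⟩`. -/
def Vgrp : Subgroup (Equiv.Perm (K × K × K)) :=
  Subgroup.closure {g | ∃ u v : K, g = alphaPerm u v 0}

/-- `F = ⟨α_{(0,0,w)} : w ∈ F_q⟩`. -/
def Fgrp : Subgroup (Equiv.Perm (K × K × K)) :=
  Subgroup.closure {g | ∃ w : K, g = alphaPerm 0 0 w}

/-- `Z₀ = ⟨α_{(u,0,w)} : u,w ∈ F_q⟩`. -/
def Z0grp : Subgroup (Equiv.Perm (K × K × K)) :=
  Subgroup.closure {g | ∃ u w : K, g = alphaPerm u 0 w}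

/-- `Z = ⟨α_{(u,0,0)} : u ∈ F_q⟩`. -/
def Zgrp : Subgroup (Equiv.Perm (K × K × K)) :=
  Subgroup.closure {g | ∃ u : K, g = alphaPerm u 0 0}

/-- `C = ⟨γ_e : e ∈ F_q⟩`. -/
def Cgrp : Subgroup (Equiv.Perm (K × K × K)) :=
  Subgroup.closure {g | ∃ e : K, g = gammaPerm e}

/-- `R = ⟨β_{μ,μ} : μ ∈ F_q^×⟩`. -/
def Rgrp (ε : ℕ) : Subgroup (Equiv.Perm (K × K × K)) :=
  Subgroup.closure {g | ∃ μ : Kˣ, g = betaPerm ε μ μ}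

/-- `S = ⟨β_{μ²,μ} : μ ∈ F_q^×⟩`. -/
def Sgrp (ε : ℕ) : Subgroup (Equiv.Perm (K × K × K)) :=
  Subgroup.closure {g | ∃ μ : Kˣ, g = betaPerm ε (μ ^ 2) μ}

/-- `T = ⟨β_{μ,μ⁻¹} : μ ∈ F_q^×⟩`. -/
def Tgrp (ε : ℕ) : Subgroup (Equiv.Perm (K × K × K)) :=
  Subgroup.closure {g | ∃ μ : Kˣ, g = betaPerm ε μ μ⁻¹}

/-- `D = ⟨δ⟩`. -/
def Dgrp : Subgroup (Equiv.Perm (K × K × K)) :=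
  Subgroup.closure {deltaPerm K}

/-- `E = ⟨τ_d : d ∈ F_q⟩`. -/
def Egrp (ε : ℕ) : Subgroup (Equiv.Perm (K × K × K)) :=
  Subgroup.closure {g | ∃ d : K, g = tauPerm ε d}

/-- `M = ⟨C, D, T⟩`. -/
def Mgrp (ε : ℕ) : Subgroup (Equiv.Perm (K × K × K)) :=
  Cgrp K ⊔ Dgrp K ⊔ Tgrp K ε

/-- `Q = ⟨A, C⟩`. -/
def QgrpBig : Subgroup (Equiv.Perm (K × K × K)) :=
  Agrp K ⊔ Cgrp K

/-- `P = ⟨Q, E⟩`. -/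
def Pgrp (ε : ℕ) : Subgroup (Equiv.Perm (K × K × K)) :=
  QgrpBig K ⊔ Egrp K ε

/-- `Σ = ⟨σ⟩`. -/
noncomputable def Siggrp (K : Type*) [Field K] [Fintype K] [CharP K 3] :
    Subgroup (Equiv.Perm (K × K × K)) :=
  Subgroup.closure {sigmaPerm K}

/-- `G₁ = ⟨A, M, S, Σ⟩`. -/
noncomputable def G1grp (K : Type*) [Field K] [Fintype K] [CharP K 3] (ε : ℕ) :
    Subgroup (Equiv.Perm (K × K × K)) :=
  Agrp K ⊔ Mgrp K ε ⊔ Sgrp K ε ⊔ Siggrp K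

/-- `G₂ = ⟨Q, S, E, T, Σ⟩`. -/
noncomputable def G2grp (K : Type*) [Field K] [Fintype K] [CharP K 3] (ε : ℕ) :
    Subgroup (Equiv.Perm (K × K × K)) :=
  QgrpBig K ⊔ Sgrp K ε ⊔ Egrp K ε ⊔ Tgrp K ε ⊔ Siggrp K

/-- `G₁₂ = ⟨Q, S, T, Σ⟩`. -/
noncomputable def G12grp (K : Type*) [Field K] [Fintype K] [CharP K 3] (ε : ℕ) :
    Subgroup (Equiv.Perm (K × K × K)) :=
  QgrpBig K ⊔ Sgrp K ε ⊔ Tgrp K ε ⊔ Siggrp K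

/-! Every generator of `G₁` and of `⟨Q, S, T, Σ⟩` normalizes the translation group `A`, so both
`G₁ ∩ G₂` and `⟨Q, S, T, Σ⟩` lie in `N_{G₂}(A)`. Conversely, `⟨Q, S, T, Σ⟩` normalizes
`P = ⟨Q, E⟩`, so `G₂ = P · ⟨Q, S, T, Σ⟩`, and `P = Q · E` because `E` normalizes `Q`.
Conjugating `α_{(0,1,0)}` by `τ_d` gives `α_{(d,1,0)} γ_{2d}`, which lies in `A` only when
`2d = 0`; hence `P ∩ N(A) = Q`, and `N_{G₂}(A) ⊆ Q · ⟨Q, S, T, Σ⟩ = ⟨Q, S, T, Σ⟩`. -/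

namespace Subgroup

variable {G : Type*} [Group G]

theorem mem_normalizer_closure_of_forall_mul_eq [Finite G] {s : Set G} {g : G}
    (h : ∀ x ∈ s, ∃ y ∈ closure s, g * x = y * g) : g ∈ normalizer (closure s : Set G) := by
  have hmap : (closure s).map (MulAut.conj g).toMonoidHom ≤ closure s := by
    rw [MonoidHom.map_closure, closure_le]
    rintro _ ⟨x, hx, rfl⟩
    obtain ⟨y, hy, hxy⟩ := h x hx
    simpa [mul_inv_eq_of_eq_mul hxy] using hy
  exact mem_normalizer_fintype fun x hx => hmap ⟨x, hx, rfl⟩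

theorem mem_closure_setOf_eq_iff {A : Type*} [AddGroup A] (f : A → G)
    (hf : ∀ a b, f (a + b) = f a * f b) {g : G} :
    g ∈ closure {g | ∃ a, g = f a} ↔ ∃ a, g = f a := by
  let φ : Multiplicative A →* G :=
    { toFun a := f a.toAdd
      map_one' := by simpa using hf 0 0
      map_mul' a b := hf a.toAdd b.toAdd }
  have hrange : {g | ∃ a, g = f a} = (φ.range : Set G) :=
    Set.ext fun g => ⟨fun ⟨a, ha⟩ => ⟨.ofAdd a, ha.symm⟩, fun ⟨a, ha⟩ => ⟨a.toAdd, ha.symm⟩⟩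
  rw [hrange, closure_eq]
  exact (Set.ext_iff.mp hrange g).symm

end Subgroup

open Subgroup
open scoped Pointwise

variable {K}

@[simp] lemma alphaPerm_apply (u v w : K) (x : K × K × K) :
    alphaPerm u v w x = (x.1 + u, x.2.1 + v, x.2.2 + w) := rfl

@[simp] lemma gammaPerm_apply (e : K) (x : K × K × K) :
    gammaPerm e x = (x.1 + e * x.2.1, x.2.1, x.2.2) := rfl

@[simp] lemma deltaPerm_apply (x : K × K × K) :
    deltaPerm K x = (x.2.1, -x.1, x.2.2) := rfl

@[simp] lemma tauPerm_apply (ε : ℕ) (d : K) (x : K × K × K) :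
    tauPerm ε d x = (x.1 + d * x.2.1 ^ 2 + d ^ ε * x.2.2, x.2.1, x.2.2) := rfl

@[simp] lemma betaPerm_apply (ε : ℕ) (l m : Kˣ) (x : K × K × K) :
    betaPerm ε l m x = (l * x.1, m * x.2.1, (l * m : K) ^ (2 * ε) * x.2.2) := by
  simp [betaPerm]

@[simp] lemma sigmaPerm_apply [Fintype K] [CharP K 3] (x : K × K × K) :
    sigmaPerm K x = (x.1 ^ 3, x.2.1 ^ 3, x.2.2 ^ 3) := rfl

lemma mem_Agrp_iff {g : Perm (K × K × K)} : g ∈ Agrp K ↔ ∃ u v w : K, g = alphaPerm u v w := by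
  have h := mem_closure_setOf_eq_iff (g := g) (fun x : K × K × K => alphaPerm x.1 x.2.1 x.2.2)
    fun x y => by ext <;> simp <;> ring
  simpa only [Agrp, Prod.exists] using h

lemma mem_Egrp_iff {ε : ℕ} (hadd : ∀ x y : K, (x + y) ^ ε = x ^ ε + y ^ ε)
    {g : Perm (K × K × K)} : g ∈ Egrp K ε ↔ ∃ d : K, g = tauPerm ε d :=
  mem_closure_setOf_eq_iff _ fun d d' => by ext <;> simp [hadd]; ring

lemma gammaPerm_mul_alphaPerm (e u v w : K) :
    gammaPerm e * alphaPerm u v w = alphaPerm (u + e * v) v w * gammaPerm e := by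
  ext <;> simp; ring

lemma deltaPerm_mul_alphaPerm (u v w : K) :
    deltaPerm K * alphaPerm u v w = alphaPerm v (-u) w * deltaPerm K := by
  ext <;> simp; ring

lemma betaPerm_mul_alphaPerm (ε : ℕ) (l m : Kˣ) (u v w : K) :
    betaPerm ε l m * alphaPerm u v w
      = alphaPerm (l * u) (m * v) ((l * m : K) ^ (2 * ε) * w) * betaPerm ε l m := by
  ext <;> simp <;> ring

lemma sigmaPerm_mul_alphaPerm [Fintype K] [CharP K 3] (u v w : K) :
    sigmaPerm K * alphaPerm u v w = alphaPerm (u ^ 3) (v ^ 3) (w ^ 3) * sigmaPerm K := by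
  ext <;> simp [add_pow_char]

lemma betaPerm_mul_gammaPerm (ε : ℕ) (l m : Kˣ) (e : K) :
    betaPerm ε l m * gammaPerm e = gammaPerm (l * e / m) * betaPerm ε l m := by
  ext <;> simp; field_simp

lemma sigmaPerm_mul_gammaPerm [Fintype K] [CharP K 3] (e : K) :
    sigmaPerm K * gammaPerm e = gammaPerm (e ^ 3) * sigmaPerm K := by
  ext <;> simp [add_pow_char, mul_pow]

lemma betaPerm_mul_tauPerm {ε : ℕ} (hq : ∀ x : K, x ^ (3 * ε) = x) (l m : Kˣ) (d : K) :
    betaPerm ε l m * tauPerm ε d = tauPerm ε (l * d / m ^ 2) * betaPerm ε l m := by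
  have hl : (l : K) ^ ε * (l : K) ^ (2 * ε) = l := by
    rw [← pow_add, show ε + 2 * ε = 3 * ε by ring, hq]
  have key : (l * d / m ^ 2 : K) ^ ε * (l * m : K) ^ (2 * ε) = l * d ^ ε := by
    calc (l * d / m ^ 2 : K) ^ ε * (l * m : K) ^ (2 * ε) = (l ^ ε * l ^ (2 * ε)) * d ^ ε := by
          rw [div_pow, mul_pow, mul_pow, ← pow_mul]; field_simp
      _ = l * d ^ ε := by rw [hl]
  have hm : (l * d / m ^ 2 : K) * m ^ 2 = l * d := by field_simp
  ext ⟨a, b, c⟩ <;> simp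
  linear_combination -c * key - b ^ 2 * hm

lemma sigmaPerm_mul_tauPerm [Fintype K] [CharP K 3] (ε : ℕ) (d : K) :
    sigmaPerm K * tauPerm ε d = tauPerm ε (d ^ 3) * sigmaPerm K := by
  ext <;> simp [add_pow_char, mul_pow, ← pow_mul, mul_comm]

lemma tauPerm_mul_alphaPerm (ε : ℕ) (d u v w : K) :
    tauPerm ε d * alphaPerm u v w
      = alphaPerm (u + d * v ^ 2 + d ^ ε * w) v w * gammaPerm (2 * d * v) * tauPerm ε d := by
  ext <;> simp; ring

lemma tauPerm_mul_gammaPerm (ε : ℕ) (d e : K) :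
    tauPerm ε d * gammaPerm e = gammaPerm e * tauPerm ε d := by
  ext <;> simp; ring

lemma QgrpBig_eq_closure : QgrpBig K =
    closure ({g | ∃ u v w : K, g = alphaPerm u v w} ∪ {g | ∃ e : K, g = gammaPerm e}) :=
  (closure_union _ _).symm

lemma eq_zero_of_gammaPerm_mem_Agrp {e : K} (h : gammaPerm e ∈ Agrp K) : e = 0 := by
  obtain ⟨u, v, w, hγ⟩ := mem_Agrp_iff.mp h
  have h₀ := congrArg (· (0, 0, 0)) hγ
  have h₁ := congrArg (· (0, 1, 0)) hγ
  simp only [gammaPerm_apply, alphaPerm_apply, Prod.mk.injEq] at h₀ h₁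
  linear_combination h₁.1 - h₀.1

lemma tauPerm_zero {ε : ℕ} (hε : ε ≠ 0) : tauPerm ε (0 : K) = 1 := by
  ext <;> simp [hε]

lemma eq_zero_of_tauPerm_mem_normalizer_Agrp {ε : ℕ} (h2 : (2 : K) ≠ 0) {d : K}
    (h : tauPerm ε d ∈ normalizer (Agrp K : Set (Perm (K × K × K)))) : d = 0 := by
  have hconj := (mem_normalizer_iff.mp h (alphaPerm 0 1 0)).mp (mem_Agrp_iff.mpr ⟨_, _, _, rfl⟩)
  rw [mul_inv_eq_of_eq_mul (tauPerm_mul_alphaPerm ε d 0 1 0)] at hconj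
  have hγ := (mul_mem_cancel_left (mem_Agrp_iff.mpr ⟨_, _, _, rfl⟩)).mp hconj
  simpa [h2] using eq_zero_of_gammaPerm_mem_Agrp hγ

section Finite

variable [Finite K]

lemma mem_normalizer_Agrp {g : Perm (K × K × K)}
    (h : ∀ u v w : K, ∃ u' v' w' : K, g * alphaPerm u v w = alphaPerm u' v' w' * g) :
    g ∈ normalizer (Agrp K : Set (Perm (K × K × K))) :=
  mem_normalizer_closure_of_forall_mul_eq <| by
    rintro _ ⟨u, v, w, rfl⟩
    obtain ⟨u', v', w', h'⟩ := h u v w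
    exact ⟨_, subset_closure ⟨u', v', w', rfl⟩, h'⟩

lemma mem_normalizer_Cgrp {g : Perm (K × K × K)}
    (h : ∀ e : K, ∃ e' : K, g * gammaPerm e = gammaPerm e' * g) :
    g ∈ normalizer (Cgrp K : Set (Perm (K × K × K))) :=
  mem_normalizer_closure_of_forall_mul_eq <| by
    rintro _ ⟨e, rfl⟩
    obtain ⟨e', h'⟩ := h e
    exact ⟨_, subset_closure ⟨e', rfl⟩, h'⟩

lemma mem_normalizer_Egrp {ε : ℕ} {g : Perm (K × K × K)}
    (h : ∀ d : K, ∃ d' : K, g * tauPerm ε d = tauPerm ε d' * g) :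
    g ∈ normalizer (Egrp K ε : Set (Perm (K × K × K))) :=
  mem_normalizer_closure_of_forall_mul_eq <| by
    rintro _ ⟨d, rfl⟩
    obtain ⟨d', h'⟩ := h d
    exact ⟨_, subset_closure ⟨d', rfl⟩, h'⟩

lemma betaPerm_mem_normalizer_Agrp (ε : ℕ) (l m : Kˣ) :
    betaPerm ε l m ∈ normalizer (Agrp K : Set (Perm (K × K × K))) :=
  mem_normalizer_Agrp fun u v w => ⟨_, _, _, betaPerm_mul_alphaPerm ε l m u v w⟩

lemma Sgrp_le_normalizer_Agrp (ε : ℕ) : Sgrp K ε ≤ normalizer (Agrp K : Set (Perm (K × K × K))) :=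
  closure_le _ |>.mpr <| by rintro _ ⟨μ, rfl⟩; exact betaPerm_mem_normalizer_Agrp ε _ _

lemma Tgrp_le_normalizer_Agrp (ε : ℕ) : Tgrp K ε ≤ normalizer (Agrp K : Set (Perm (K × K × K))) :=
  closure_le _ |>.mpr <| by rintro _ ⟨μ, rfl⟩; exact betaPerm_mem_normalizer_Agrp ε _ _

lemma Cgrp_le_normalizer_Agrp : Cgrp K ≤ normalizer (Agrp K : Set (Perm (K × K × K))) :=
  closure_le _ |>.mpr <| by
    rintro _ ⟨e, rfl⟩
    exact mem_normalizer_Agrp fun u v w => ⟨_, _, _, gammaPerm_mul_alphaPerm e u v w⟩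

lemma Dgrp_le_normalizer_Agrp : Dgrp K ≤ normalizer (Agrp K : Set (Perm (K × K × K))) :=
  closure_le _ |>.mpr <| Set.singleton_subset_iff.mpr <|
    mem_normalizer_Agrp fun u v w => ⟨_, _, _, deltaPerm_mul_alphaPerm u v w⟩

lemma QgrpBig_le_normalizer_Agrp : QgrpBig K ≤ normalizer (Agrp K : Set (Perm (K × K × K))) :=
  sup_le le_normalizer Cgrp_le_normalizer_Agrp

lemma Egrp_le_normalizer_QgrpBig (ε : ℕ) :
    Egrp K ε ≤ normalizer (QgrpBig K : Set (Perm (K × K × K))) :=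
  closure_le _ |>.mpr <| by
    rintro _ ⟨d, rfl⟩
    rw [QgrpBig_eq_closure]
    refine mem_normalizer_closure_of_forall_mul_eq ?_
    rintro _ (⟨u, v, w, rfl⟩ | ⟨e, rfl⟩)
    · refine ⟨_, ?_, tauPerm_mul_alphaPerm ε d u v w⟩
      rw [← QgrpBig_eq_closure]
      exact mul_mem (mem_sup_left (mem_Agrp_iff.mpr ⟨_, _, _, rfl⟩))
        (mem_sup_right (subset_closure ⟨_, rfl⟩))
    · exact ⟨_, subset_closure (Or.inr ⟨e, rfl⟩), tauPerm_mul_gammaPerm ε d e⟩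

lemma betaPerm_mem_normalizer_Pgrp {ε : ℕ} (hq : ∀ x : K, x ^ (3 * ε) = x) (l m : Kˣ) :
    betaPerm ε l m ∈ normalizer (Pgrp K ε : Set (Perm (K × K × K))) :=
  normalizer_inf_normalizer_le_normalizer_sup _ _
    ⟨normalizer_inf_normalizer_le_normalizer_sup _ _
      ⟨betaPerm_mem_normalizer_Agrp ε l m,
        mem_normalizer_Cgrp fun e => ⟨_, betaPerm_mul_gammaPerm ε l m e⟩⟩,
      mem_normalizer_Egrp fun d => ⟨_, betaPerm_mul_tauPerm hq l m d⟩⟩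

lemma Pgrp_inf_normalizer_Agrp_le_QgrpBig {ε : ℕ} (hε : ε ≠ 0)
    (hadd : ∀ x y : K, (x + y) ^ ε = x ^ ε + y ^ ε) (h2 : (2 : K) ≠ 0) :
    Pgrp K ε ⊓ normalizer (Agrp K : Set (Perm (K × K × K))) ≤ QgrpBig K := by
  rintro p ⟨hpP, hpN⟩
  have hpQE : p ∈ (QgrpBig K : Set (Perm (K × K × K))) * (Egrp K ε : Set (Perm (K × K × K))) := by
    rwa [← coe_mul_of_right_le_normalizer_left _ _ (Egrp_le_normalizer_QgrpBig ε)]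
  obtain ⟨q, hQ, t, ht, rfl⟩ := Set.mem_mul.mp hpQE
  obtain ⟨d, rfl⟩ := (mem_Egrp_iff hadd).mp ht
  have hτ : tauPerm ε d ∈ normalizer (Agrp K : Set (Perm (K × K × K))) :=
    (mul_mem_cancel_left (QgrpBig_le_normalizer_Agrp hQ)).mp hpN
  rwa [eq_zero_of_tauPerm_mem_normalizer_Agrp h2 hτ, tauPerm_zero hε, mul_one]

end Finite

section CharThree

variable [Fintype K] [CharP K 3]

lemma sigmaPerm_mem_normalizer_Agrp :
    sigmaPerm K ∈ normalizer (Agrp K : Set (Perm (K × K × K))) :=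
  mem_normalizer_Agrp fun u v w => ⟨_, _, _, sigmaPerm_mul_alphaPerm u v w⟩

lemma Siggrp_le_normalizer_Agrp : Siggrp K ≤ normalizer (Agrp K : Set (Perm (K × K × K))) :=
  closure_le _ |>.mpr <| Set.singleton_subset_iff.mpr sigmaPerm_mem_normalizer_Agrp

lemma G1grp_le_normalizer_Agrp (ε : ℕ) :
    G1grp K ε ≤ normalizer (Agrp K : Set (Perm (K × K × K))) :=
  sup_le (sup_le (sup_le le_normalizer
    (sup_le (sup_le Cgrp_le_normalizer_Agrp Dgrp_le_normalizer_Agrp) (Tgrp_le_normalizer_Agrp ε)))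
    (Sgrp_le_normalizer_Agrp ε)) Siggrp_le_normalizer_Agrp

lemma G12grp_le_normalizer_Agrp (ε : ℕ) :
    G12grp K ε ≤ normalizer (Agrp K : Set (Perm (K × K × K))) :=
  sup_le (sup_le (sup_le QgrpBig_le_normalizer_Agrp (Sgrp_le_normalizer_Agrp ε))
    (Tgrp_le_normalizer_Agrp ε)) Siggrp_le_normalizer_Agrp

lemma sigmaPerm_mem_normalizer_Pgrp (ε : ℕ) :
    sigmaPerm K ∈ normalizer (Pgrp K ε : Set (Perm (K × K × K))) :=
  normalizer_inf_normalizer_le_normalizer_sup _ _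
    ⟨normalizer_inf_normalizer_le_normalizer_sup _ _
      ⟨sigmaPerm_mem_normalizer_Agrp,
        mem_normalizer_Cgrp fun e => ⟨_, sigmaPerm_mul_gammaPerm e⟩⟩,
      mem_normalizer_Egrp fun d => ⟨_, sigmaPerm_mul_tauPerm ε d⟩⟩

lemma G12grp_le_normalizer_Pgrp {ε : ℕ} (hq : ∀ x : K, x ^ (3 * ε) = x) :
    G12grp K ε ≤ normalizer (Pgrp K ε : Set (Perm (K × K × K))) :=
  sup_le (sup_le (sup_le (le_sup_left.trans le_normalizer)
    (closure_le _ |>.mpr <| by rintro _ ⟨μ, rfl⟩; exact betaPerm_mem_normalizer_Pgrp hq _ _))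
    (closure_le _ |>.mpr <| by rintro _ ⟨μ, rfl⟩; exact betaPerm_mem_normalizer_Pgrp hq _ _))
    (closure_le _ |>.mpr <| Set.singleton_subset_iff.mpr (sigmaPerm_mem_normalizer_Pgrp ε))

lemma G12grp_le_G1grp (ε : ℕ) : G12grp K ε ≤ G1grp K ε := by
  unfold G12grp G1grp QgrpBig Mgrp
  order

lemma G12grp_le_G2grp (ε : ℕ) : G12grp K ε ≤ G2grp K ε := by
  unfold G12grp G2grp
  order

lemma G2grp_le_Pgrp_sup_G12grp (ε : ℕ) : G2grp K ε ≤ Pgrp K ε ⊔ G12grp K ε := by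
  unfold G2grp G12grp Pgrp
  order

lemma G2grp_inf_normalizer_Agrp_le_G12grp {ε : ℕ} (hε : ε ≠ 0)
    (hadd : ∀ x y : K, (x + y) ^ ε = x ^ ε + y ^ ε) (hq : ∀ x : K, x ^ (3 * ε) = x)
    (h2 : (2 : K) ≠ 0) :
    G2grp K ε ⊓ normalizer (Agrp K : Set (Perm (K × K × K))) ≤ G12grp K ε := by
  rintro g ⟨hg2, hgN⟩
  have hgPG : g ∈ (Pgrp K ε : Set (Perm (K × K × K))) * (G12grp K ε : Set (Perm (K × K × K))) := by
    rw [← coe_mul_of_right_le_normalizer_left _ _ (G12grp_le_normalizer_Pgrp hq)]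
    exact G2grp_le_Pgrp_sup_G12grp ε hg2
  obtain ⟨p, hp, h, hh, rfl⟩ := Set.mem_mul.mp hgPG
  have hpN : p ∈ normalizer (Agrp K : Set (Perm (K × K × K))) :=
    (mul_mem_cancel_right (G12grp_le_normalizer_Agrp ε hh)).mp hgN
  have hpQ := Pgrp_inf_normalizer_Agrp_le_QgrpBig hε hadd h2 ⟨hp, hpN⟩
  exact mul_mem (mem_sup_left (mem_sup_left (mem_sup_left hpQ))) hh

end CharThree

/-- Lemma 2.11 (parts i, ii): `G₁ ∩ G₂ = ⟨Q, S, T, Σ⟩`, and this group is the normalizer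
of `A` in `G₂`. -/
theorem stmt12 (r : ℕ) (hr : 1 ≤ r) (K : Type*) [Field K] [Fintype K] [CharP K 3]
    (hcard : Fintype.card K = 3 ^ r) (ε : ℕ) (hε : ε = 3 ^ (r - 1)) :
    G1grp K ε ⊓ G2grp K ε = G12grp K ε
    ∧ G12grp K ε = G2grp K ε ⊓ Subgroup.normalizer (Agrp K : Set (Equiv.Perm (K × K × K))) := by
  have : Fact (Nat.Prime 3) := ⟨Nat.prime_three⟩
  have hε0 : ε ≠ 0 := by rw [hε]; positivity
  have hadd (x y : K) : (x + y) ^ ε = x ^ ε + y ^ ε := by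
    rw [hε]; exact add_pow_char_pow x y 3 (r - 1)
  have hq (x : K) : x ^ (3 * ε) = x := by
    rw [hε, ← pow_succ', Nat.sub_add_cancel hr, ← hcard, FiniteField.pow_card]
  have h2 : (2 : K) ≠ 0 := by
    simpa using (CharP.cast_eq_zero_iff K 3 2).not.mpr (by decide)
  have hkey := G2grp_inf_normalizer_Agrp_le_G12grp hε0 hadd hq h2
  refine ⟨le_antisymm (fun g hg => hkey ⟨hg.2, G1grp_le_normalizer_Agrp ε hg.1⟩)
    (le_inf (G12grp_le_G1grp ε) (G12grp_le_G2grp ε)),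
    le_antisymm (le_inf (G12grp_le_G2grp ε) (G12grp_le_normalizer_Agrp ε)) hkey⟩
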